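/- Let S ∈ 𝔖 be nonempty with canonical form S₁⋯S_r, and set S_{r+1} = ∅ with Supp S_{r+1} = ∅. Then: (a) S = ⋁_{(h,v)} S_{h,v} (join up to ∼), where the join is over all pairs (h,v) with 0 < h ≤ r and v a minimal element of Supp S_h \ H_Λ(Supp S_{h+1}) in the poset (Γ₀,Λ); (b) if S = T₁ ∨ ⋯ ∨ T_l with every T_i ∈ 𝔓, then for each pair (h,v) as in (a) there exists an index i with S_{h,v} ∼ T_i; (c) there exist T₁,…,T_l ∈ 𝔓 with S = T₁ ∨ ⋯ ∨ T_l, and if l is the smallest possible and S = U₁ ∨ ⋯ ∨ U_l with all U_i ∈ 𝔓, then after reindexing T_i ∼ U_i for all i. -/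

import Mathlib

namespace KP

/-! ## Quivers on a fixed vertex set `Fin n`.

An orientation is encoded by `Λ : Fin n → Fin n → ℕ`, where `Λ a b` is the number of
arrows from `a` to `b`.  The underlying graph is recorded by `edges Λ a b = Λ a b + Λ b a`. -/

/-- The orientation `σ_x Λ` obtained by reversing every arrow incident with `x`. -/
def flipO {n : ℕ} (x : Fin n) (Λ : Fin n → Fin n → ℕ) : Fin n → Fin n → ℕ :=
  fun a b => if a = x ∨ b = x then Λ b a else Λ a b

/-- Number of edges of the underlying graph joining `a` and `b`. -/
def edges {n : ℕ} (Λ : Fin n → Fin n → ℕ) (a b : Fin n) : ℕ := Λ a b + Λ b a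

/-- `x` is a sink: no arrow starts at `x`. -/
def IsSink {n : ℕ} (Λ : Fin n → Fin n → ℕ) (x : Fin n) : Prop := ∀ y, Λ x y = 0

/-- `S` is a `(+)`-admissible sequence of vertices on `(Γ, Λ)`. -/
def Admissible {n : ℕ} (Λ : Fin n → Fin n → ℕ) : List (Fin n) → Prop
  | [] => True
  | x :: xs => IsSink Λ x ∧ Admissible (flipO x Λ) xs

/-- The orientation `Λ^S`. -/
def orientAfter {n : ℕ} (Λ : Fin n → Fin n → ℕ) : List (Fin n) → (Fin n → Fin n → ℕ)
  | [] => Λ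
  | x :: xs => orientAfter (flipO x Λ) xs

/-- Elementary move: interchange two consecutive vertices not joined by an edge. -/
inductive SwapRel {n : ℕ} (E : Fin n → Fin n → ℕ) : List (Fin n) → List (Fin n) → Prop
  | swap (l₁ l₂ : List (Fin n)) (a b : Fin n) (h : E a b = 0) :
      SwapRel E (l₁ ++ a :: b :: l₂) (l₁ ++ b :: a :: l₂)

/-- The equivalence `∼` on sequences of vertices: reflexive–transitive closure of the
(symmetric) relation `SwapRel`. -/
def Sim {n : ℕ} (E : Fin n → Fin n → ℕ) : List (Fin n) → List (Fin n) → Prop :=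
  Relation.ReflTransGen (SwapRel E)

/-- The preorder `S ⪯ T` : `T ∼ S ++ U` for some `(+)`-admissible sequence `U` on `(Γ, Λ^S)`. -/
def Preceq {n : ℕ} (Λ : Fin n → Fin n → ℕ) (S T : List (Fin n)) : Prop :=
  ∃ U, Admissible (orientAfter Λ S) U ∧ Sim (edges Λ) T (S ++ U)

/-- Support of a sequence of vertices. -/
def suppOf {n : ℕ} (S : List (Fin n)) : Set (Fin n) := {v | v ∈ S}

/-- The partial order on vertices: `x ≤ y` iff there is a path from `x` to `y` in `(Γ, Λ)`. -/
def PathLE {n : ℕ} (Λ : Fin n → Fin n → ℕ) (x y : Fin n) : Prop :=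
  Relation.ReflTransGen (fun a b => Λ a b ≠ 0) x y

/-- A filter (up-closed set) of the poset `(Γ₀, Λ)`. -/
def IsFilter {n : ℕ} (Λ : Fin n → Fin n → ℕ) (F : Set (Fin n)) : Prop :=
  ∀ x ∈ F, ∀ y, PathLE Λ x y → y ∈ F

/-- The principal filter `⟨x⟩`. -/
def upSet {n : ℕ} (Λ : Fin n → Fin n → ℕ) (x : Fin n) : Set (Fin n) := {y | PathLE Λ x y}

/-- The hull `H_Λ(F)`: the smallest filter containing `F` and every vertex joined
by an edge to a vertex of `F`. -/
def hull {n : ℕ} (Λ : Fin n → Fin n → ℕ) (F : Set (Fin n)) : Set (Fin n) :=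
  {y | ∃ x, (x ∈ F ∨ ∃ z ∈ F, edges Λ z x ≠ 0) ∧ PathLE Λ x y}

/-- `segs` is a canonical form of `S` (Proposition 2.1): `S ∼ S₁S₂⋯S_r`, each segment
consists of distinct vertices, is nonempty, and `Supp S_i = Supp (S_i S_{i+1} ⋯ S_r)`. -/
def Segments {n : ℕ} (Λ : Fin n → Fin n → ℕ) (S : List (Fin n))
    (segs : List (List (Fin n))) : Prop :=
  Admissible Λ segs.flatten ∧ Sim (edges Λ) S segs.flatten ∧
  (∀ seg ∈ segs, seg ≠ [] ∧ seg.Nodup) ∧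
  ∀ i, i < segs.length → suppOf (segs.getD i []) = suppOf ((segs.drop i).flatten)

/-- `J` is (a representative of) the join `S ∨ T` (Definition 2.4):  the canonical form of `J`
has `Supp R_i = Supp S_i ∪ Supp T_i` (out-of-range segments read as `∅`). -/
def IsJoin {n : ℕ} (Λ : Fin n → Fin n → ℕ) (S T J : List (Fin n)) : Prop :=
  ∃ CS CT CJ, Segments Λ S CS ∧ Segments Λ T CT ∧ Segments Λ J CJ ∧
    ∀ i, suppOf (CJ.getD i []) = suppOf (CS.getD i []) ∪ suppOf (CT.getD i [])

/-- `M` is (a representative of) the meet `S ∧ T` (Definition 2.4). -/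
def IsMeet {n : ℕ} (Λ : Fin n → Fin n → ℕ) (S T M : List (Fin n)) : Prop :=
  ∃ CS CT CM, Segments Λ S CS ∧ Segments Λ T CT ∧ Segments Λ M CM ∧
    ∀ i, suppOf (CM.getD i []) = suppOf (CS.getD i []) ∩ suppOf (CT.getD i [])

/-- `S` is (equivalent to) the join `T₁ ∨ ⋯ ∨ T_l` of the list of sequences `Ts`. -/
def IsJoinList {n : ℕ} (Λ : Fin n → Fin n → ℕ) : List (List (Fin n)) → List (Fin n) → Prop
  | [], S => S = []
  | T :: Ts, S => ∃ J, IsJoinList Λ Ts J ∧ IsJoin Λ T J S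

/-- The segments of a canonical form of a principal sequence `S_{r,x}` (Definition 3.1). -/
def PrincipalSegs {n : ℕ} (Λ : Fin n → Fin n → ℕ) (segs : List (List (Fin n)))
    (r : ℕ) (x : Fin n) : Prop :=
  segs.length = r ∧ 0 < r ∧
  (∀ i, i + 1 < r → suppOf (segs.getD i []) = hull Λ (suppOf (segs.getD (i+1) []))) ∧
  suppOf (segs.getD (r-1) []) = upSet Λ x

/-- `S ∼ S_{r,x}`, the principal `(+)`-admissible sequence of size `r` with
`Supp S_r = ⟨x⟩`. -/
def IsPrincipalSeq {n : ℕ} (Λ : Fin n → Fin n → ℕ) (r : ℕ) (x : Fin n)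
    (S : List (Fin n)) : Prop :=
  ∃ segs, Segments Λ S segs ∧ PrincipalSegs Λ segs r x

/-- `S` is a principal `(+)`-admissible sequence. -/
def IsPrincipal {n : ℕ} (Λ : Fin n → Fin n → ℕ) (S : List (Fin n)) : Prop :=
  ∃ r x, IsPrincipalSeq Λ r x S


/-! ## Representations of `(Γ, Λ)` over a field `k`. -/

/-- A (finite-dimensional) representation of the quiver `(Γ, Λ)` over `k`:
the space at vertex `x` is `Fin (d x) → k`, and each arrow carries a linear map. -/
structure Rep (k : Type) [Field k] (n : ℕ) (Λ : Fin n → Fin n → ℕ) where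
  d : Fin n → ℕ
  f : ∀ a b : Fin n, Fin (Λ a b) → ((Fin (d a) → k) →ₗ[k] (Fin (d b) → k))

variable {k : Type} [Field k] {n : ℕ}

/-- A morphism of representations. -/
structure RepHom {Λ : Fin n → Fin n → ℕ} (M N : Rep k n Λ) where
  g : ∀ x, (Fin (M.d x) → k) →ₗ[k] (Fin (N.d x) → k)
  comm : ∀ a b i v, g b (M.f a b i v) = N.f a b i (g a v)

/-- Isomorphism of representations. -/
def RepIso {Λ : Fin n → Fin n → ℕ} (M N : Rep k n Λ) : Prop :=
  ∃ g : ∀ x, (Fin (M.d x) → k) ≃ₗ[k] (Fin (N.d x) → k),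
    ∀ a b i v, g b (M.f a b i v) = N.f a b i (g a v)

/-- The zero representation. -/
def IsZeroRep {Λ : Fin n → Fin n → ℕ} (M : Rep k n Λ) : Prop := ∀ x, M.d x = 0

/-- Cast between the standard spaces. -/
def castL (k : Type) [Field k] {m m' : ℕ} (h : m = m') : (Fin m → k) ≃ₗ[k] (Fin m' → k) :=
  LinearEquiv.funCongrLeft k k (finCongr h.symm)

/-- The splitting `(Fin (m + p) → k) ≃ₗ (Fin m → k) × (Fin p → k)`. -/
def splitL (k : Type) [Field k] (m p : ℕ) : (Fin (m + p) → k) ≃ₗ[k] (Fin m → k) × (Fin p → k) :=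
  (LinearEquiv.funCongrLeft k k finSumFinEquiv).trans
    (LinearEquiv.sumArrowLequivProdArrow _ _ k k)

/-- Direct sum of two representations. -/
def dSum {Λ : Fin n → Fin n → ℕ} (M N : Rep k n Λ) : Rep k n Λ where
  d x := M.d x + N.d x
  f a b i :=
    (splitL k (M.d b) (N.d b)).symm.toLinearMap ∘ₗ
      (LinearMap.prodMap (M.f a b i) (N.f a b i)) ∘ₗ (splitL k (M.d a) (N.d a)).toLinearMap

/-- The zero representation (as an object). -/
def zeroRep (k : Type) [Field k] (n : ℕ) (Λ : Fin n → Fin n → ℕ) : Rep k n Λ where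
  d _ := 0
  f _ _ _ := 0

/-- Direct sum of a list of representations. -/
def dSumList {Λ : Fin n → Fin n → ℕ} (L : List (Rep k n Λ)) : Rep k n Λ :=
  L.foldr dSum (zeroRep k n Λ)

/-- `M` is indecomposable. -/
def Indecomp {Λ : Fin n → Fin n → ℕ} (M : Rep k n Λ) : Prop :=
  ¬ IsZeroRep M ∧ ∀ A B : Rep k n Λ, RepIso M (dSum A B) → IsZeroRep A ∨ IsZeroRep B

/-- `X` is a direct summand of `M`. -/
def IsSummand {Λ : Fin n → Fin n → ℕ} (X M : Rep k n Λ) : Prop :=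
  ∃ Y, RepIso M (dSum X Y)

/-! ### Reflection functors (on objects) -/

/-- Index type of the arrows ending at `x`. -/
abbrev Arin {n : ℕ} (Λ : Fin n → Fin n → ℕ) (x : Fin n) := Σ y : Fin n, Fin (Λ y x)

/-- Index type of the arrows starting at `x`. -/
abbrev Aout {n : ℕ} (Λ : Fin n → Fin n → ℕ) (x : Fin n) := Σ y : Fin n, Fin (Λ x y)

/-- The map `h : ⊕_{a : y → x} V(y) → V(x)` induced by the maps along the arrows ending at `x`. -/
noncomputable def inMap (Λ : Fin n → Fin n → ℕ) (M : Rep k n Λ) (x : Fin n) :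
    ((p : Arin Λ x) → (Fin (M.d p.1) → k)) →ₗ[k] (Fin (M.d x) → k) :=
  ∑ p : Arin Λ x, (M.f p.1 x p.2) ∘ₗ LinearMap.proj p

/-- The map `h' : V(x) → ⊕_{a : x → y} V(y)` induced by the maps along arrows starting at `x`. -/
def outMap (Λ : Fin n → Fin n → ℕ) (M : Rep k n Λ) (x : Fin n) :
    (Fin (M.d x) → k) →ₗ[k] ((p : Aout Λ x) → (Fin (M.d p.1) → k)) :=
  LinearMap.pi fun p => M.f x p.1 p.2

noncomputable def kerEquiv (Λ : Fin n → Fin n → ℕ) (M : Rep k n Λ) (x : Fin n) :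
    LinearMap.ker (inMap Λ M x) ≃ₗ[k]
      (Fin (Module.finrank k (LinearMap.ker (inMap Λ M x))) → k) :=
  (Module.finBasis k _).equivFun

noncomputable def cokerEquiv (Λ : Fin n → Fin n → ℕ) (M : Rep k n Λ) (x : Fin n) :
    (((p : Aout Λ x) → (Fin (M.d p.1) → k)) ⧸ LinearMap.range (outMap Λ M x)) ≃ₗ[k]
      (Fin (Module.finrank k (((p : Aout Λ x) → (Fin (M.d p.1) → k)) ⧸
        LinearMap.range (outMap Λ M x))) → k) :=
  (Module.finBasis k _).equivFun

/-- The positive reflection functor `F_x⁺` (on objects): the space at `x` is replaced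
by the kernel of `inMap`, with the maps along the reversed arrows induced by inclusion
followed by the projections. -/
noncomputable def reflPlus (x : Fin n) (Λ : Fin n → Fin n → ℕ) (M : Rep k n Λ) :
    Rep k n (flipO x Λ) where
  d z := if z = x then Module.finrank k (LinearMap.ker (inMap Λ M x)) else M.d z
  f a b i :=
    if ha : a = x then
      if hb : b = x then 0
      else
        (castL k (if_neg hb).symm).toLinearMap ∘ₗ
          (LinearMap.proj (φ := fun p : Arin Λ x => Fin (M.d p.1) → k)
            (⟨b, Fin.cast (by subst ha; simp [flipO]) i⟩ : Arin Λ x)) ∘ₗ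
          (LinearMap.ker (inMap Λ M x)).subtype ∘ₗ
          (kerEquiv Λ M x).symm.toLinearMap ∘ₗ (castL k (if_pos ha)).toLinearMap
    else
      if hb : b = x then 0
      else
        (castL k (if_neg hb).symm).toLinearMap ∘ₗ
          M.f a b (Fin.cast (by simp [flipO, ha, hb]) i) ∘ₗ
          (castL k (if_neg ha)).toLinearMap

/-- The negative reflection functor `F_x⁻` (on objects), presented as a map from
representations of `(Γ, σ_x Λ)` to representations of `(Γ, Λ)`: the space at `x` is
replaced by the cokernel of `outMap`. -/
noncomputable def reflMinus (x : Fin n) (Λ : Fin n → Fin n → ℕ)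
    (N : Rep k n (flipO x Λ)) : Rep k n Λ where
  d z := if z = x then
      Module.finrank k (((p : Aout (flipO x Λ) x) → (Fin (N.d p.1) → k)) ⧸
        LinearMap.range (outMap (flipO x Λ) N x))
    else N.d z
  f a b i :=
    if hb : b = x then
      if ha : a = x then 0
      else
        (castL k (if_pos hb).symm).toLinearMap ∘ₗ
          (cokerEquiv (flipO x Λ) N x).toLinearMap ∘ₗ
          (LinearMap.range (outMap (flipO x Λ) N x)).mkQ ∘ₗ
          (LinearMap.single k (fun p : Aout (flipO x Λ) x => Fin (N.d p.1) → k)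
            (⟨a, Fin.cast (by subst hb; simp [flipO]) i⟩ : Aout (flipO x Λ) x)) ∘ₗ
          (castL k (if_neg ha)).toLinearMap
    else
      if ha : a = x then 0
      else
        (castL k (if_neg hb).symm).toLinearMap ∘ₗ
          N.f a b (Fin.cast (by simp [flipO, ha, hb]) i) ∘ₗ
          (castL k (if_neg ha)).toLinearMap

/-- `F(S) = F_{x_s}⁺ ⋯ F_{x_1}⁺` applied to a representation. -/
noncomputable def FList : (S : List (Fin n)) → (Λ : Fin n → Fin n → ℕ) → Rep k n Λ →
    Rep k n (orientAfter Λ S)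
  | [], _, M => M
  | x :: xs, Λ, M => FList xs (flipO x Λ) (reflPlus x Λ M)

/-- `S` annihilates `M` : `F(S) M = 0`. -/
def Annihilates (Λ : Fin n → Fin n → ℕ) (S : List (Fin n)) (M : Rep k n Λ) : Prop :=
  IsZeroRep (FList S Λ M)

/-- `M` is preprojective: some `(+)`-admissible sequence annihilates it. -/
def Preprojective (Λ : Fin n → Fin n → ℕ) (M : Rep k n Λ) : Prop :=
  ∃ S, Admissible Λ S ∧ Annihilates Λ S M

/-- `S` is a shortest `(+)`-admissible sequence annihilating `M` : it annihilates `M` and no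
proper subsequence of `S` annihilates `M`.  (This predicate is invariant under `∼`, so it
expresses `S ∼ S_M`.) -/
def IsShortestAnn (Λ : Fin n → Fin n → ℕ) (M : Rep k n Λ) (S : List (Fin n)) : Prop :=
  Admissible Λ S ∧ Annihilates Λ S M ∧
  ∀ S', Admissible Λ S' → Annihilates Λ S' M → Preceq Λ S' S → Sim (edges Λ) S' S

/-- The simple representation `L_x` concentrated at the vertex `x`. -/
def simpleRep (Λ : Fin n → Fin n → ℕ) (x : Fin n) : Rep k n Λ where
  d z := if z = x then 1 else 0
  f _ _ _ := 0

/-- `M(S) = F_{x₁}⁻ F_{x₂}⁻ ⋯ F_{x_{s-1}}⁻ (L_{x_s})`, where `L_{x_s}` is the simple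
(projective) module over `k(Γ, σ_{x_{s-1}} ⋯ σ_{x_1} Λ)` at the vertex `x_s`. -/
noncomputable def Mof : (Λ : Fin n → Fin n → ℕ) → (S : List (Fin n)) → Rep k n Λ
  | Λ, [] => zeroRep k n Λ
  | Λ, [x] => simpleRep Λ x
  | Λ, x :: y :: ys => reflMinus x Λ (Mof (flipO x Λ) (y :: ys))

variable {n : ℕ}

/-! ## The Weyl group -/

/-- The simple reflection `σ_i` attached to a generalized Cartan matrix `A`,
as a linear endomorphism of `ℤⁿ` : `σ_i(v) = v - (∑ l, a_{il} v_l) e_i`. -/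
def sigmaL (A : Fin n → Fin n → ℤ) (i : Fin n) : (Fin n → ℤ) →ₗ[ℤ] (Fin n → ℤ) where
  toFun v := v - (∑ l, A i l * v l) • Pi.single i 1
  map_add' v w := by
    simp only [Pi.add_apply, mul_add, Finset.sum_add_distrib, add_smul]
    abel
  map_smul' c v := by
    simp only [Pi.smul_apply, smul_eq_mul, RingHom.id_apply, smul_sub]
    congr 1
    rw [smul_smul, Finset.mul_sum]
    congr 1
    exact Finset.sum_congr rfl fun l _ => by ring

theorem sigma_invol (A : Fin n → Fin n → ℤ) (hA : ∀ i, A i i = 2) (i : Fin n) :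
    (sigmaL A i).comp (sigmaL A i) = LinearMap.id := by
  apply LinearMap.ext
  intro v
  simp only [LinearMap.comp_apply, LinearMap.id_apply, sigmaL, LinearMap.coe_mk, AddHom.coe_mk]
  set c := ∑ l, A i l * v l with hc
  set s : Fin n → ℤ := Pi.single i 1 with hs
  have h1 : ∑ l, A i l * (v - c • s) l = -c := by
    have h2 : ∀ l, A i l * (v - c • s) l = A i l * v l - c * (A i l * s l) := fun l => by
      simp only [Pi.sub_apply, Pi.smul_apply, smul_eq_mul]
      ring
    rw [Finset.sum_congr rfl fun l _ => h2 l, Finset.sum_sub_distrib, ← Finset.mul_sum]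
    have h3 : ∑ l, A i l * s l = 2 := by
      rw [Finset.sum_eq_single i]
      · simp [hs, hA i]
      · intro b _ hb
        simp [hs, Pi.single_eq_of_ne hb]
      · simp
    rw [h3, ← hc]
    ring
  rw [h1]
  ext j
  simp only [Pi.sub_apply, Pi.smul_apply, smul_eq_mul]
  ring

/-- The simple reflection `σ_i` as an automorphism of `ℤⁿ`. -/
def sigmaE (A : Fin n → Fin n → ℤ) (hA : ∀ i, A i i = 2) (i : Fin n) :
    (Fin n → ℤ) ≃ₗ[ℤ] (Fin n → ℤ) :=
  LinearEquiv.ofLinear (sigmaL A i) (sigmaL A i) (sigma_invol A hA i) (sigma_invol A hA i)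

/-- The length `ℓ(w)`: the least `l ≥ 0` such that `w` is a product of `l` simple
reflections. -/
noncomputable def wordLen (A : Fin n → Fin n → ℤ) (hA : ∀ i, A i i = 2)
    (w : (Fin n → ℤ) ≃ₗ[ℤ] (Fin n → ℤ)) : ℕ :=
  sInf {l | ∃ ys : List (Fin n), ys.length = l ∧ w = (ys.map (sigmaE A hA)).prod}

/-- The word `w(S) = σ_{x_s} ⋯ σ_{x_1}` associated to a sequence `S = x₁, …, x_s`. -/
def wordOf (A : Fin n → Fin n → ℤ) (hA : ∀ i, A i i = 2) (S : List (Fin n)) :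
    (Fin n → ℤ) ≃ₗ[ℤ] (Fin n → ℤ) :=
  ((S.reverse).map (sigmaE A hA)).prod

/-- The symmetric generalized Cartan matrix of the underlying graph of `(Γ, Λ)`. -/
def cartanOf (Λ : Fin n → Fin n → ℕ) : Fin n → Fin n → ℤ :=
  fun i j => if i = j then 2 else -(edges Λ i j : ℤ)

theorem cartan_diag (Λ : Fin n → Fin n → ℕ) : ∀ i, cartanOf Λ i i = 2 := by
  intro i; simp [cartanOf]

/-- The simple reflections of the Weyl group of the underlying graph of `(Γ, Λ)`. -/
def wSig (Λ : Fin n → Fin n → ℕ) : Fin n → ((Fin n → ℤ) ≃ₗ[ℤ] (Fin n → ℤ)) :=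
  sigmaE (cartanOf Λ) (cartan_diag Λ)

/-- `w(S)` for a sequence of vertices of `(Γ, Λ)`. -/
def wordOfSeq (Λ : Fin n → Fin n → ℕ) (S : List (Fin n)) :
    (Fin n → ℤ) ≃ₗ[ℤ] (Fin n → ℤ) :=
  ((S.reverse).map (wSig Λ)).prod

/-- The word `w(S)` is reduced: `ℓ(w(S))` equals the number of letters of `S`. -/
noncomputable def IsReducedSeq (Λ : Fin n → Fin n → ℕ) (S : List (Fin n)) : Prop :=
  wordLen (cartanOf Λ) (cartan_diag Λ) (wordOfSeq Λ S) = S.length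

/-! ## Dynkin graphs of types A, D, E -/

def edgeA (n : ℕ) : Fin n → Fin n → ℕ := fun i j =>
  if (i : ℕ) + 1 = (j : ℕ) ∨ (j : ℕ) + 1 = (i : ℕ) then 1 else 0

def edgeD (n : ℕ) : Fin n → Fin n → ℕ := fun i j =>
  if ((i : ℕ) = 0 ∧ (j : ℕ) = 2) ∨ ((j : ℕ) = 0 ∧ (i : ℕ) = 2) ∨
     ((i : ℕ) = 1 ∧ (j : ℕ) = 2) ∨ ((j : ℕ) = 1 ∧ (i : ℕ) = 2) ∨
     (2 ≤ (i : ℕ) ∧ (i : ℕ) + 1 = (j : ℕ)) ∨ (2 ≤ (j : ℕ) ∧ (j : ℕ) + 1 = (i : ℕ))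
  then 1 else 0

def edgeE (n : ℕ) : Fin n → Fin n → ℕ := fun i j =>
  if ((i : ℕ) + 1 = (j : ℕ) ∧ (j : ℕ) ≤ n - 2) ∨ ((j : ℕ) + 1 = (i : ℕ) ∧ (i : ℕ) ≤ n - 2) ∨
     ((i : ℕ) = 2 ∧ (j : ℕ) = n - 1) ∨ ((j : ℕ) = 2 ∧ (i : ℕ) = n - 1)
  then 1 else 0

/-- The underlying graph (given by its edge-count function `E`) is a Dynkin diagram of
type `A`, `D`, or `E`. -/
def IsDynkinADE (n : ℕ) (E : Fin n → Fin n → ℕ) : Prop :=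
  ∃ e : Fin n ≃ Fin n,
    (∀ i j, E i j = edgeA n (e i) (e j)) ∨
    (4 ≤ n ∧ ∀ i j, E i j = edgeD n (e i) (e j)) ∨
    ((n = 6 ∨ n = 7 ∨ n = 8) ∧ ∀ i j, E i j = edgeE n (e i) (e j))

/-! ## Coxeter-sortable elements -/

/-- Lexicographic comparison of index tuples. -/
def lexLE {s : ℕ} (ι ι' : Fin s → ℕ) : Prop :=
  ι = ι' ∨ ∃ j, (∀ j', j' < j → ι j' = ι' j') ∧ ι j < ι' j

/-- `w` is `c`-sortable for the Coxeter element determined by the half-infinite word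
`cseq` (with dividers every `blockLen` letters): the lexicographically first subsequence
of `cseq` that is a reduced word for `w` defines a sequence of subsets (between adjacent
dividers) that is decreasing under inclusion. -/
def CSortable (A : Fin n → Fin n → ℤ) (hA : ∀ i, A i i = 2) (cseq : ℕ → Fin n)
    (blockLen : ℕ) (w : (Fin n → ℤ) ≃ₗ[ℤ] (Fin n → ℤ)) : Prop :=
  ∃ (s : ℕ) (ι : Fin s → ℕ), StrictMono ι ∧
    w = ((List.ofFn fun j => cseq (ι j)).map (sigmaE A hA)).prod ∧
    wordLen A hA w = s ∧
    (∀ ι' : Fin s → ℕ, StrictMono ι' →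
      w = ((List.ofFn fun j => cseq (ι' j)).map (sigmaE A hA)).prod → lexLE ι ι') ∧
    ∀ m : ℕ, {a : Fin n | ∃ j, (ι j) / blockLen = m + 1 ∧ cseq (ι j) = a} ⊆
             {a : Fin n | ∃ j, (ι j) / blockLen = m ∧ cseq (ι j) = a}


/-- A nonzero non-isomorphism between representations. -/
def RepStep {k : Type} [Field k] {n : ℕ} {Λ : Fin n → Fin n → ℕ} (X Y : Rep k n Λ) : Prop :=
  ∃ f : RepHom X Y, (∃ x v, f.g x v ≠ 0) ∧ ¬ ∀ x, Function.Bijective (f.g x)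

/-- `v` is a minimal element of `D` in the poset `(Γ₀, Λ)`. -/
def MinimalIn {n : ℕ} (Λ : Fin n → Fin n → ℕ) (D : Set (Fin n)) (v : Fin n) : Prop :=
  v ∈ D ∧ ∀ u ∈ D, PathLE Λ u v → u = v

/-- The pairs `(h, v)` of Proposition 3.2(a): `0 < h ≤ r` and `v` a minimal element of
`Supp S_h \ H_Λ(Supp S_{h+1})` (with `Supp S_{r+1} = ∅`). -/
def JoinPair {n : ℕ} (Λ : Fin n → Fin n → ℕ) (segs : List (List (Fin n)))
    (p : ℕ × Fin n) : Prop :=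
  0 < p.1 ∧ p.1 ≤ segs.length ∧
  MinimalIn Λ (suppOf (segs.getD (p.1 - 1) []) \ hull Λ (suppOf (segs.getD p.1 []))) p.2


/-!
Everything is read off from multiplicities. Call `level S i` the set of vertices occurring more
than `i` times in `S`. The occurrences of the two ends of an arrow interleave, so the levels of an
admissible sequence are filters with `H(level S (i+1)) ⊆ level S i`; conversely every such chain
of sets is realised by an admissible sequence listing each term in a topological order, and two
admissible sequences with the same levels are equivalent. The supports of a canonical form are
the levels, a join is a levelwise union, and the levels of `S_{r,x}` are `H^{r-1-i}(⟨x⟩)`, the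
smallest such chain through `x` at level `r - 1`.

(a) A vertex of `level S (h-1)` outside `H(level S h)` lies above a minimal such vertex `v`, and
`⟨v⟩` is the level `h - 1` of `S_{h,v}`; the rest of the level lies in the hull of the next one.
(b) A principal summand `S_{r,x}` containing such a `v` at level `h - 1` must have `r = h`
(otherwise `v` would be in the hull of level `h`), and then `x ≤ v` forces `x = v`.
(c) By (b) the pairs `(h, v)` label distinct summands of any decomposition, and by (a) their
number is attained.
-/

variable {Λ : Fin n → Fin n → ℕ}

section Orientation

theorem edges_comm (Λ : Fin n → Fin n → ℕ) (a b : Fin n) : edges Λ a b = edges Λ b a :=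
  Nat.add_comm _ _

theorem edges_flipO (x : Fin n) (Λ : Fin n → Fin n → ℕ) : edges (flipO x Λ) = edges Λ := by
  funext a b
  unfold edges flipO
  by_cases h : a = x ∨ b = x
  · rw [if_pos h, if_pos h.symm, Nat.add_comm]
  · rw [if_neg h, if_neg (mt Or.symm h)]

theorem edges_orientAfter (Λ : Fin n → Fin n → ℕ) (L : List (Fin n)) :
    edges (orientAfter Λ L) = edges Λ := by
  induction L generalizing Λ with
  | nil => rfl
  | cons x L ih => rw [orientAfter, ih, edges_flipO]

theorem flipO_comm (x y : Fin n) (Λ : Fin n → Fin n → ℕ) :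
    flipO x (flipO y Λ) = flipO y (flipO x Λ) := by
  funext a b
  unfold flipO
  by_cases a = x <;> by_cases b = x <;> by_cases a = y <;> by_cases b = y <;> simp_all

theorem orientAfter_apply (Λ : Fin n → Fin n → ℕ) (L : List (Fin n)) (a b : Fin n) :
    orientAfter Λ L a b = if Even (L.count a + L.count b) then Λ a b else Λ b a := by
  induction L generalizing Λ with
  | nil => simp [orientAfter]
  | cons x L ih =>
    rw [orientAfter, ih]
    unfold flipO
    by_cases hax : a = x <;> by_cases hbx : b = x
    · subst hax hbx; simp
    · subst hax
      simp only [List.count_cons_self, List.count_cons_of_ne (Ne.symm hbx), true_or, or_true,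
        if_true]
      rw [Nat.add_right_comm]
      by_cases h : Even (L.count a + L.count b) <;> simp [h, Nat.even_add_one]
    · subst hbx
      simp only [List.count_cons_self, List.count_cons_of_ne (Ne.symm hax), true_or, or_true,
        if_true]
      rw [← Nat.add_assoc]
      by_cases h : Even (L.count a + L.count b) <;> simp [h, Nat.even_add_one]
    · simp [hax, hbx, List.count_cons_of_ne (Ne.symm hax), List.count_cons_of_ne (Ne.symm hbx)]

theorem admissible_append {A B : List (Fin n)} :
    Admissible Λ (A ++ B) ↔ Admissible Λ A ∧ Admissible (orientAfter Λ A) B := by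
  induction A generalizing Λ with
  | nil => simp [Admissible, orientAfter]
  | cons x A ih => simp only [List.cons_append, Admissible, ih, orientAfter, and_assoc]

theorem Admissible.count_le_of_arrow {S : List (Fin n)} (hS : Admissible Λ S) {a b : Fin n}
    (hab : Λ a b ≠ 0) : S.count a ≤ S.count b ∧ S.count b ≤ S.count a + 1 := by
  induction S generalizing Λ a b with
  | nil => simp
  | cons x S ih =>
    obtain ⟨hx, hS⟩ := hS
    rcases eq_or_ne x a with rfl | hxa
    · exact absurd (hx b) hab
    rcases eq_or_ne x b with rfl | hxb
    · have := ih hS (a := x) (b := a) (by simpa [flipO] using hab)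
      simp only [List.count_cons_self, List.count_cons_of_ne hxa]
      omega
    · have := ih hS (a := a) (b := b) (by simpa [flipO, Ne.symm hxa, Ne.symm hxb] using hab)
      simpa [List.count_cons_of_ne hxa, List.count_cons_of_ne hxb] using this

end Orientation

section Equivalence

variable {E : Fin n → Fin n → ℕ} {l l' l'' : List (Fin n)}

theorem SwapRel.perm (h : SwapRel E l l') : l.Perm l' := by
  rcases h with ⟨l₁, l₂, a, b, -⟩
  exact (List.Perm.swap b a l₂).append_left l₁

theorem Sim.perm (h : Sim E l l') : l.Perm l' := by
  induction h with
  | refl => rfl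
  | tail _ hstep ih => exact ih.trans hstep.perm

theorem Sim.trans (h : Sim E l l') (h' : Sim E l' l'') : Sim E l l'' :=
  Relation.ReflTransGen.trans h h'

theorem Sim.symm (h : Sim (edges Λ) l l') : Sim (edges Λ) l' l := by
  induction h with
  | refl => exact Relation.ReflTransGen.refl
  | tail _ hstep ih =>
    rcases hstep with ⟨l₁, l₂, a, b, hab⟩
    refine Relation.ReflTransGen.head ?_ ih
    exact SwapRel.swap l₁ l₂ b a (by rwa [edges_comm])

theorem Sim.cons (x : Fin n) (h : Sim E l l') : Sim E (x :: l) (x :: l') := by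
  induction h with
  | refl => exact Relation.ReflTransGen.refl
  | tail _ hstep ih =>
    rcases hstep with ⟨l₁, l₂, a, b, hab⟩
    exact ih.tail (SwapRel.swap (x :: l₁) l₂ a b hab)

theorem sim_append_cons {P : List (Fin n)} {x : Fin n} (h : ∀ y ∈ P, E y x = 0)
    (Q : List (Fin n)) : Sim E (P ++ x :: Q) (x :: (P ++ Q)) := by
  induction P with
  | nil => exact Relation.ReflTransGen.refl
  | cons y P ih =>
    refine (Sim.cons y (ih fun z hz => h z (List.mem_cons_of_mem _ hz))).tail ?_
    exact SwapRel.swap [] (P ++ Q) y x (h y List.mem_cons_self)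

theorem Admissible.swap (l₁ : List (Fin n)) {a b : Fin n} {l₂ : List (Fin n)}
    (hab : edges Λ a b = 0) (h : Admissible Λ (l₁ ++ a :: b :: l₂)) :
    Admissible Λ (l₁ ++ b :: a :: l₂) := by
  induction l₁ generalizing Λ with
  | cons x l₁ ih => exact ⟨h.1, ih (by rwa [edges_flipO]) h.2⟩
  | nil =>
    obtain ⟨ha, hb, hrest⟩ := h
    rcases eq_or_ne a b with rfl | hne
    · exact ⟨ha, hb, hrest⟩
    have hΛab : Λ a b = 0 := by unfold edges at hab; omega
    have hΛba : Λ b a = 0 := by unfold edges at hab; omega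
    refine ⟨fun y => ?_, fun y => ?_, by rwa [flipO_comm]⟩
    · by_cases hya : y = a
      · rwa [hya]
      · simpa [flipO, hya, hne.symm] using hb y
    · by_cases hyb : y = b
      · simpa [flipO, hyb] using hΛba
      · simpa [flipO, hyb, hne] using ha y

theorem Admissible.of_sim (hs : Sim (edges Λ) l l') (h : Admissible Λ l) : Admissible Λ l' := by
  induction hs with
  | refl => exact h
  | tail _ hstep ih =>
    rcases hstep with ⟨l₁, l₂, a, b, hab⟩
    exact ih.swap l₁ hab

theorem sim_of_count_eq {T U : List (Fin n)} (hT : Admissible Λ T) (hU : Admissible Λ U)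
    (hcount : ∀ v, T.count v = U.count v) : Sim (edges Λ) T U := by
  induction T generalizing Λ U with
  | nil =>
    obtain rfl : U = [] := List.eq_nil_iff_forall_not_mem.2 fun v hv => by
      simpa [← hcount v] using List.count_pos_iff.2 hv
    exact Relation.ReflTransGen.refl
  | cons x T ih =>
    obtain ⟨hx, hT⟩ := hT
    have hxU : x ∈ U := List.count_pos_iff.1 (by simp [← hcount x])
    obtain ⟨P, Q, rfl, hxP⟩ := List.eq_append_cons_of_mem hxU
    -- an arrow `y → x` from a vertex `y` of `P` would force `x` to occur in `P` already
    have hPx : ∀ y ∈ P, edges Λ y x = 0 := by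
      intro y hy
      by_contra hne
      have hyx : Λ y x ≠ 0 := by unfold edges at hne; rw [hx y] at hne; omega
      have := ((admissible_append.1 hU).1.count_le_of_arrow hyx).1
      rw [List.count_eq_zero.2 hxP] at this
      exact List.count_pos_iff.2 hy |>.ne' (by omega)
    have hmove := sim_append_cons hPx Q
    have hPQ : Admissible (flipO x Λ) (P ++ Q) := (hU.of_sim hmove).2
    have hcount' : ∀ v, T.count v = (P ++ Q).count v := by
      intro v
      have h1 := hcount v
      have h2 := hmove.perm.count_eq v
      simp only [List.count_cons, List.count_append] at h1 h2 ⊢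
      omega
    have := ih hT hPQ hcount'
    rw [edges_flipO] at this
    exact (this.cons x).trans hmove.symm

end Equivalence

section PathOrder

def Acyclic (Λ : Fin n → Fin n → ℕ) : Prop :=
  ∀ a : Fin n, ¬ Relation.TransGen (fun u v => Λ u v ≠ 0) a a

theorem Acyclic.loopless (hacyc : Acyclic Λ) (a : Fin n) : Λ a a = 0 :=
  not_not.1 fun h => hacyc a (Relation.TransGen.single h)

theorem PathLE.antisymm (hacyc : Acyclic Λ) {x y : Fin n} (h : PathLE Λ x y)
    (h' : PathLE Λ y x) : x = y := by
  rcases Relation.reflTransGen_iff_eq_or_transGen.1 h with rfl | hxy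
  · rfl
  rcases Relation.reflTransGen_iff_eq_or_transGen.1 h' with rfl | hyx
  · rfl
  exact absurd (hxy.trans hyx) (hacyc x)

theorem Acyclic.exists_minimalIn (hacyc : Acyclic Λ) {D : Set (Fin n)} (hD : D.Nonempty) :
    ∃ v, MinimalIn Λ D v := by
  have : Std.Irrefl (Relation.TransGen fun u v : Fin n => Λ u v ≠ 0) := ⟨hacyc⟩
  have : IsTrans (Fin n) (Relation.TransGen fun u v => Λ u v ≠ 0) :=
    ⟨fun _ _ _ => Relation.TransGen.trans⟩
  obtain ⟨v, hvD, hmin⟩ := (Finite.wellFounded_of_trans_of_irrefl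
    (Relation.TransGen fun u v : Fin n => Λ u v ≠ 0)).has_min D hD
  refine ⟨v, hvD, fun u hu huv => ?_⟩
  rcases Relation.reflTransGen_iff_eq_or_transGen.1 huv with rfl | htg
  · rfl
  · exact absurd htg (hmin u hu)

theorem Acyclic.exists_minimalIn_pathLE (hacyc : Acyclic Λ) {D : Set (Fin n)} {u : Fin n}
    (hu : u ∈ D) : ∃ v, MinimalIn Λ D v ∧ PathLE Λ v u := by
  obtain ⟨v, ⟨hvD, hvu⟩, hmin⟩ := hacyc.exists_minimalIn (D := {w ∈ D | PathLE Λ w u})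
    ⟨u, hu, Relation.ReflTransGen.refl⟩
  exact ⟨v, ⟨hvD, fun w hw hwv => hmin w ⟨hw, hwv.trans hvu⟩ hwv⟩, hvu⟩

theorem Acyclic.exists_source (hacyc : Acyclic Λ) {D : Set (Fin n)} (hD : D.Nonempty) :
    ∃ v ∈ D, ∀ u ∈ D, Λ u v = 0 := by
  obtain ⟨v, hvD, hmin⟩ := hacyc.exists_minimalIn hD
  refine ⟨v, hvD, fun u hu => not_not.1 fun huv => ?_⟩
  obtain rfl := hmin u hu (Relation.ReflTransGen.single huv)
  exact huv (hacyc.loopless u)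

theorem Acyclic.exists_sorted_list (hacyc : Acyclic Λ) (G : Set (Fin n)) :
    ∃ L : List (Fin n), L.Nodup ∧ (∀ v, v ∈ L ↔ v ∈ G) ∧ L.Pairwise fun a b => Λ a b = 0 := by
  classical
  suffices ∀ F : Finset (Fin n), ∃ L : List (Fin n), L.Nodup ∧ (∀ v, v ∈ L ↔ v ∈ F) ∧
      L.Pairwise fun a b => Λ b a = 0 by
    obtain ⟨L, hnd, hmem, hsort⟩ := this G.toFinite.toFinset
    exact ⟨L.reverse, List.nodup_reverse.2 hnd, by simpa using hmem, List.pairwise_reverse.2 hsort⟩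
  intro F
  induction F using Finset.strongInduction with
  | H F ih =>
    rcases F.eq_empty_or_nonempty with rfl | hF
    · exact ⟨[], List.nodup_nil, by simp, List.Pairwise.nil⟩
    obtain ⟨a, haF, hsrc⟩ := hacyc.exists_source (D := (F : Set (Fin n))) hF
    obtain ⟨L, hnd, hmem, hsort⟩ := ih (F.erase a) (Finset.erase_ssubset haF)
    refine ⟨a :: L, ?_, fun v => ?_, List.pairwise_cons.2 ⟨fun b hb => ?_, hsort⟩⟩
    · exact List.nodup_cons.2 ⟨fun h => by simpa using (hmem a).1 h, hnd⟩
    · rw [List.mem_cons, hmem, Finset.mem_erase]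
      by_cases hva : v = a
      · simpa [hva] using haF
      · simp [hva]
    · exact hsrc b (Finset.mem_of_mem_erase ((hmem b).1 hb))

end PathOrder

section Hull

variable {F G : Set (Fin n)}

theorem isFilter_upSet (x : Fin n) : IsFilter Λ (upSet Λ x) :=
  fun _ hy _ hyz => Relation.ReflTransGen.trans hy hyz

theorem subset_hull (F : Set (Fin n)) : F ⊆ hull Λ F :=
  fun x hx => ⟨x, Or.inl hx, Relation.ReflTransGen.refl⟩

theorem mem_hull_of_edges {z y : Fin n} (hz : z ∈ F) (h : edges Λ z y ≠ 0) : y ∈ hull Λ F :=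
  ⟨y, Or.inr ⟨z, hz, h⟩, Relation.ReflTransGen.refl⟩

theorem isFilter_hull (F : Set (Fin n)) : IsFilter Λ (hull Λ F) := by
  rintro y ⟨x, hx, hxy⟩ z hyz
  exact ⟨x, hx, hxy.trans hyz⟩

theorem hull_mono (h : F ⊆ G) : hull Λ F ⊆ hull Λ G := by
  rintro y ⟨x, hx | ⟨z, hz, hzx⟩, hxy⟩
  exacts [⟨x, Or.inl (h hx), hxy⟩, ⟨x, Or.inr ⟨z, h hz, hzx⟩, hxy⟩]

theorem hull_subset (hFG : F ⊆ G) (hedges : ∀ z ∈ F, ∀ y, edges Λ z y ≠ 0 → y ∈ G)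
    (hG : IsFilter Λ G) : hull Λ F ⊆ G := by
  rintro y ⟨x, hx | ⟨z, hz, hzx⟩, hxy⟩
  exacts [hG x (hFG hx) y hxy, hG x (hedges z hz x hzx) y hxy]

theorem hull_empty : hull Λ (∅ : Set (Fin n)) = ∅ :=
  Set.eq_empty_of_subset_empty (hull_subset le_rfl (by simp) fun _ h => h.elim)

end Hull

section Levels

/-- `level S i` is `Supp S_{i+1}` for the canonical form `S₁ ⋯ S_r` of `S`
(`Segments.suppOf_getD`). -/
def level (S : List (Fin n)) (i : ℕ) : Set (Fin n) := {v | i < S.count v}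

theorem level_succ_subset (S : List (Fin n)) (i : ℕ) : level S (i + 1) ⊆ level S i :=
  fun _ hv => Nat.lt_of_succ_lt hv

structure IsLevelChain (Λ : Fin n → Fin n → ℕ) (F : ℕ → Set (Fin n)) : Prop where
  isFilter : ∀ i, IsFilter Λ (F i)
  hull_subset : ∀ i, hull Λ (F (i + 1)) ⊆ F i
  exists_eq_empty : ∃ m, F m = ∅

variable {S : List (Fin n)}

theorem Admissible.isFilter_level (hS : Admissible Λ S) (i : ℕ) : IsFilter Λ (level S i) := by
  intro a ha y hay
  induction hay with
  | refl => exact ha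
  | tail _ hstep ih => exact lt_of_lt_of_le ih (hS.count_le_of_arrow hstep).1

theorem Admissible.hull_level_succ_subset (hS : Admissible Λ S) (i : ℕ) :
    hull Λ (level S (i + 1)) ⊆ level S i := by
  refine hull_subset (level_succ_subset S i) (fun z hz y hzy => ?_) (hS.isFilter_level i)
  have hz : i + 1 < S.count z := hz
  show i < S.count y
  have : Λ z y ≠ 0 ∨ Λ y z ≠ 0 := by unfold edges at hzy; omega
  rcases this with h | h
  · have := (hS.count_le_of_arrow h).1; omega
  · have := (hS.count_le_of_arrow h).2; omega

theorem Admissible.isLevelChain (hS : Admissible Λ S) : IsLevelChain Λ (level S) :=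
  ⟨hS.isFilter_level, hS.hull_level_succ_subset, S.length,
    Set.eq_empty_of_forall_notMem fun _ hv => (List.count_le_length.trans_lt hv).false⟩

variable {F : ℕ → Set (Fin n)}

theorem IsLevelChain.antitone (hF : IsLevelChain Λ F) : Antitone F :=
  antitone_nat_of_succ_le fun i => (subset_hull _).trans (hF.hull_subset i)

theorem IsLevelChain.exists_nonempty_iff (hF : IsLevelChain Λ F) :
    ∃ m, ∀ i, (F i).Nonempty ↔ i < m := by
  classical
  refine ⟨Nat.find hF.exists_eq_empty, fun i => ⟨fun hi => ?_, fun hi => ?_⟩⟩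
  · by_contra hle
    exact hi.ne_empty (Set.subset_empty_iff.1
      (Nat.find_spec hF.exists_eq_empty ▸ hF.antitone (not_lt.1 hle)))
  · exact Set.nonempty_iff_ne_empty.2 (Nat.find_min hF.exists_eq_empty hi)

end Levels

section CanonicalForm

theorem mem_getD_iff_lt_count_flatten {α : Type*} [DecidableEq α] {L : List (List α)}
    (hnd : ∀ l ∈ L, l.Nodup)
    (hsupp : ∀ i < L.length, ∀ v, v ∈ L.getD i [] ↔ v ∈ (L.drop i).flatten) (j : ℕ) (v : α) :
    v ∈ L.getD j [] ↔ j < L.flatten.count v := by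
  induction L generalizing j with
  | nil => simp
  | cons l L ih =>
    have hl : v ∈ L.flatten → v ∈ l := fun h => (hsupp 0 (by simp) v).2 (by simp [h])
    have hcount : (l :: L).flatten.count v = l.count v + L.flatten.count v := by
      simp [List.count_append]
    have hle : l.count v ≤ 1 := List.nodup_iff_count_le_one.1 (hnd l List.mem_cons_self) v
    rw [hcount]
    cases j with
    | zero =>
      rw [List.getD_cons_zero, ← List.count_pos_iff]
      refine ⟨fun h => by omega, fun h => ?_⟩
      by_cases hL : 0 < L.flatten.count v
      · exact List.count_pos_iff.2 (hl (List.count_pos_iff.1 hL))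
      · omega
    | succ j =>
      rw [List.getD_cons_succ, ih (fun l' hl' => hnd l' (List.mem_cons_of_mem _ hl'))
        (fun i hi => by simpa using hsupp (i + 1) (by simpa using hi))]
      by_cases hv : v ∈ L.flatten
      · rw [List.count_eq_one_of_mem (hnd l List.mem_cons_self) (hl hv)]; omega
      · rw [List.count_eq_zero.2 hv]; omega

variable {S T : List (Fin n)} {segs : List (List (Fin n))}

theorem Segments.admissible (h : Segments Λ S segs) : Admissible Λ S :=
  h.1.of_sim h.2.1.symm

theorem Segments.of_sim (h : Segments Λ T segs) (hST : Sim (edges Λ) S T) :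
    Segments Λ S segs :=
  ⟨h.1, hST.trans h.2.1, h.2.2⟩

theorem Segments.suppOf_getD (h : Segments Λ S segs) (i : ℕ) :
    suppOf (segs.getD i []) = level S i := by
  ext v
  show v ∈ segs.getD i [] ↔ i < S.count v
  rw [h.2.1.perm.count_eq v]
  exact mem_getD_iff_lt_count_flatten (fun l hl => (h.2.2.1 l hl).2)
    (fun i hi v => Set.ext_iff.1 (h.2.2.2 i hi) v) i v

end CanonicalForm

section Realization

theorem orientAfter_self (Λ : Fin n → Fin n → ℕ) (L : List (Fin n)) (a : Fin n) :
    orientAfter Λ L a a = Λ a a := by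
  rw [orientAfter_apply, if_pos (by simp)]

variable {seg : List (Fin n)} {a b : Fin n}

theorem orientAfter_of_mem (hnd : seg.Nodup) (ha : a ∈ seg) (hb : b ∈ seg) :
    orientAfter Λ seg a b = Λ a b := by
  rw [orientAfter_apply, List.count_eq_one_of_mem hnd ha, List.count_eq_one_of_mem hnd hb,
    if_pos (by decide)]

theorem orientAfter_of_mem_of_notMem (hnd : seg.Nodup) (ha : a ∈ seg) (hb : b ∉ seg) :
    orientAfter Λ seg a b = Λ b a := by
  rw [orientAfter_apply, List.count_eq_one_of_mem hnd ha, List.count_eq_zero.2 hb,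
    if_neg (by decide)]

theorem admissible_of_pairwise (hloop : ∀ a, Λ a a = 0) (hnd : seg.Nodup)
    (hsort : seg.Pairwise fun a b => Λ a b = 0)
    (hclosed : ∀ a ∈ seg, ∀ y, Λ a y ≠ 0 → y ∈ seg) : Admissible Λ seg := by
  induction seg generalizing Λ with
  | nil => trivial
  | cons a seg ih =>
    obtain ⟨has, hnd⟩ := List.nodup_cons.1 hnd
    obtain ⟨ha, hsort⟩ := List.pairwise_cons.1 hsort
    have hne : ∀ x ∈ seg, x ≠ a := fun x hx hxa => has (hxa ▸ hx)
    refine ⟨fun y => not_not.1 fun hy => ?_, ih (fun x => by simp [flipO, hloop]) hnd ?_ ?_⟩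
    · rcases List.mem_cons.1 (hclosed a List.mem_cons_self y hy) with rfl | hy'
      exacts [hy (hloop y), hy (ha y hy')]
    · exact hsort.imp_of_mem fun hx hz hxz => by simpa [flipO, hne _ hx, hne _ hz] using hxz
    · intro x hx y hy
      by_cases hya : y = a
      · subst hya
        simp [flipO, ha x hx] at hy
      · simp only [flipO, hne x hx, hya, or_self, if_false] at hy
        exact (List.mem_cons.1 (hclosed x (List.mem_cons_of_mem _ hx) y hy)).resolve_left hya

structure IsSortedChain (Λ : Fin n → Fin n → ℕ) (L : List (List (Fin n))) : Prop where
  nodup : ∀ seg ∈ L, seg.Nodup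
  sorted : ∀ seg ∈ L, seg.Pairwise fun a b => Λ a b = 0
  arrow_mem : ∀ seg ∈ L, ∀ a ∈ seg, ∀ y, Λ a y ≠ 0 → y ∈ seg
  succ_subset : ∀ i, ∀ z ∈ L.getD (i + 1) [], z ∈ L.getD i []
  edges_mem : ∀ i, ∀ z ∈ L.getD (i + 1) [], ∀ y, edges Λ z y ≠ 0 → y ∈ L.getD i []

variable {rest : List (List (Fin n))}

theorem IsSortedChain.getD_subset {L : List (List (Fin n))} (h : IsSortedChain Λ L) {i j : ℕ}
    (hij : i ≤ j) {v : Fin n} (hv : v ∈ L.getD j []) : v ∈ L.getD i [] := by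
  induction j, hij using Nat.le_induction with
  | base => exact hv
  | succ j _ ih => exact ih (h.succ_subset j v hv)

theorem IsSortedChain.mem_getD_iff_mem_flatten_drop {L : List (List (Fin n))}
    (h : IsSortedChain Λ L) {i : ℕ} (hi : i < L.length) (v : Fin n) :
    v ∈ L.getD i [] ↔ v ∈ (L.drop i).flatten := by
  rw [List.drop_eq_getElem_cons hi, List.flatten_cons, List.mem_append,
    List.getD_eq_getElem _ _ hi]
  refine ⟨Or.inl, fun hv => hv.elim id fun hv => ?_⟩
  obtain ⟨s, hs, hvs⟩ := List.mem_flatten.1 hv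
  obtain ⟨j, hj, rfl⟩ := List.mem_drop_iff_getElem.1 hs
  rw [← List.getD_eq_getElem _ []]
  exact h.getD_subset (j := i + 1 + j) (by omega) (by rwa [List.getD_eq_getElem])

theorem IsSortedChain.mem_getD_one (h : IsSortedChain Λ (seg :: rest)) {s : List (Fin n)}
    (hs : s ∈ rest) {v : Fin n} (hv : v ∈ s) : v ∈ (seg :: rest).getD 1 [] := by
  obtain ⟨j, hj, rfl⟩ := List.mem_iff_getElem.1 hs
  refine h.getD_subset (j := j + 1) (by omega) ?_
  rwa [List.getD_cons_succ, List.getD_eq_getElem _ _ hj]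

theorem IsSortedChain.mem_head (h : IsSortedChain Λ (seg :: rest)) {s : List (Fin n)}
    (hs : s ∈ rest) {v : Fin n} (hv : v ∈ s) : v ∈ seg :=
  h.succ_subset 0 v (h.mem_getD_one hs hv)

/-- Reflecting at the first segment `seg` reverses exactly the arrows leaving `seg`; by the hull
condition none of them starts in a later segment. -/
theorem IsSortedChain.tail (h : IsSortedChain Λ (seg :: rest)) :
    IsSortedChain (orientAfter Λ seg) rest := by
  have hnd := h.nodup seg List.mem_cons_self
  refine ⟨fun s hs => h.nodup s (List.mem_cons_of_mem _ hs), fun s hs => ?_, ?_,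
    fun i => h.succ_subset (i + 1), fun i => by simpa [edges_orientAfter] using h.edges_mem (i + 1)⟩
  · refine (h.sorted s (List.mem_cons_of_mem _ hs)).imp_of_mem fun hx hz hxz => ?_
    rwa [orientAfter_of_mem hnd (h.mem_head hs hx) (h.mem_head hs hz)]
  · intro s hs x hx y hy
    by_cases hyseg : y ∈ seg
    · rw [orientAfter_of_mem hnd (h.mem_head hs hx) hyseg] at hy
      exact h.arrow_mem s (List.mem_cons_of_mem _ hs) x hx y hy
    · rw [orientAfter_of_mem_of_notMem hnd (h.mem_head hs hx) hyseg] at hy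
      exact absurd (h.edges_mem 0 x (h.mem_getD_one hs hx) y (by unfold edges; omega)) hyseg

theorem IsSortedChain.admissible (hloop : ∀ a, Λ a a = 0) {L : List (List (Fin n))}
    (h : IsSortedChain Λ L) : Admissible Λ L.flatten := by
  induction L generalizing Λ with
  | nil => trivial
  | cons seg rest ih =>
    rw [List.flatten_cons, admissible_append]
    refine ⟨admissible_of_pairwise hloop (h.nodup seg List.mem_cons_self)
      (h.sorted seg List.mem_cons_self) (h.arrow_mem seg List.mem_cons_self), ?_⟩
    exact ih (fun a => (orientAfter_self Λ seg a).trans (hloop a)) h.tail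

theorem IsLevelChain.exists_segments (hacyc : Acyclic Λ) {F : ℕ → Set (Fin n)}
    (hF : IsLevelChain Λ F) : ∃ S segs, Segments Λ S segs ∧ ∀ i, level S i = F i := by
  choose enum hnd hmem hsort using hacyc.exists_sorted_list
  obtain ⟨m, hm⟩ := hF.exists_nonempty_iff
  set segs := (List.range m).map fun i => enum (F i)
  have hgetD : ∀ i v, v ∈ segs.getD i [] ↔ v ∈ F i := by
    intro i v
    by_cases hi : i < m
    · simp [segs, List.getD_eq_getElem?_getD, hi, hmem]
    · simpa [segs, List.getD_eq_getElem?_getD, hi] using fun hv => hi ((hm i).1 ⟨v, hv⟩)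
  have hseg : ∀ s ∈ segs, ∃ i < m, s = enum (F i) := by simp [segs, eq_comm]
  have hsorted : IsSortedChain Λ segs := by
    refine ⟨fun s hs => ?_, fun s hs => ?_, fun s hs a ha y hy => ?_, fun i z hz => ?_,
      fun i z hz y hy => ?_⟩
    · obtain ⟨i, -, rfl⟩ := hseg s hs
      exact hnd _
    · obtain ⟨i, -, rfl⟩ := hseg s hs
      exact hsort _
    · obtain ⟨i, -, rfl⟩ := hseg s hs
      rw [hmem] at ha ⊢
      exact hF.isFilter i a ha y (Relation.ReflTransGen.single hy)
    · rw [hgetD] at hz ⊢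
      exact hF.antitone (Nat.le_succ i) hz
    · rw [hgetD] at hz ⊢
      exact hF.hull_subset i (mem_hull_of_edges hz hy)
  have hsegs : Segments Λ segs.flatten segs := by
    refine ⟨hsorted.admissible hacyc.loopless, Relation.ReflTransGen.refl, fun s hs => ?_,
      fun i hi => Set.ext (hsorted.mem_getD_iff_mem_flatten_drop hi)⟩
    obtain ⟨i, hi, rfl⟩ := hseg s hs
    obtain ⟨v, hv⟩ := (hm i).2 hi
    exact ⟨List.ne_nil_of_mem ((hmem _ v).2 hv), hnd _⟩
  exact ⟨_, _, hsegs, fun i => (hsegs.suppOf_getD i).symm.trans (Set.ext (hgetD i))⟩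

end Realization

section Joins

variable {S T : List (Fin n)} {segs : List (List (Fin n))} {Ts : List (List (Fin n))}

theorem count_eq_of_level_eq (h : ∀ i, level S i = level T i) (v : Fin n) :
    S.count v = T.count v := by
  have hST := Set.ext_iff.1 (h (T.count v)) v
  have hTS := Set.ext_iff.1 (h (S.count v)) v
  change T.count v < S.count v ↔ T.count v < T.count v at hST
  change S.count v < S.count v ↔ S.count v < T.count v at hTS
  omega

theorem sim_of_level_eq (hS : Admissible Λ S) (hT : Admissible Λ T)
    (h : ∀ i, level S i = level T i) : Sim (edges Λ) S T :=
  sim_of_count_eq hS hT (count_eq_of_level_eq h)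

theorem Admissible.exists_segments (hacyc : Acyclic Λ) (hS : Admissible Λ S) :
    ∃ segs, Segments Λ S segs := by
  obtain ⟨T, segs, hsegs, hlevel⟩ := hS.isLevelChain.exists_segments hacyc
  exact ⟨segs, hsegs.of_sim (sim_of_level_eq hS hsegs.admissible fun i => (hlevel i).symm)⟩

theorem Segments.level_nonempty_iff (h : Segments Λ S segs) (i : ℕ) :
    (level S i).Nonempty ↔ i < segs.length := by
  rw [← h.suppOf_getD]
  refine ⟨fun ⟨v, hv⟩ => not_le.1 fun hi => ?_, fun hi => ?_⟩
  · rw [suppOf, List.getD_eq_default _ _ hi] at hv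
    exact List.not_mem_nil hv
  · rw [List.getD_eq_getElem _ _ hi]
    exact List.exists_mem_of_ne_nil _ (h.2.2.1 _ (List.getElem_mem hi)).1

theorem hull_iUnion {ι : Sort*} (F : ι → Set (Fin n)) :
    hull Λ (⋃ j, F j) = ⋃ j, hull Λ (F j) := by
  refine subset_antisymm ?_ (Set.iUnion_subset fun j => hull_mono (Set.subset_iUnion F j))
  rintro y ⟨x, hx | ⟨z, hz, hzx⟩, hxy⟩
  · obtain ⟨j, hj⟩ := Set.mem_iUnion.1 hx
    exact Set.mem_iUnion.2 ⟨j, x, Or.inl hj, hxy⟩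
  · obtain ⟨j, hj⟩ := Set.mem_iUnion.1 hz
    exact Set.mem_iUnion.2 ⟨j, x, Or.inr ⟨z, hj, hzx⟩, hxy⟩

theorem isLevelChain_biUnion_level (hTs : ∀ T ∈ Ts, Admissible Λ T) :
    IsLevelChain Λ fun i => ⋃ T ∈ Ts, level T i := by
  refine ⟨fun i x hx y hxy => ?_, fun i => ?_, Ts.flatten.length, ?_⟩
  · simp only [Set.mem_iUnion] at hx ⊢
    obtain ⟨T, hT, hxT⟩ := hx
    exact ⟨T, hT, (hTs T hT).isFilter_level i x hxT y hxy⟩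
  · simp_rw [hull_iUnion]
    exact Set.iUnion₂_mono fun T hT => (hTs T hT).hull_level_succ_subset i
  · refine Set.eq_empty_of_forall_notMem fun v hv => ?_
    simp only [Set.mem_iUnion] at hv
    obtain ⟨T, hT, hvT⟩ := hv
    have : T.count v ≤ Ts.flatten.count v := by
      simpa using List.Sublist.count_le v (List.sublist_flatten_of_mem hT)
    exact (this.trans List.count_le_length |>.trans_lt hvT).false

theorem IsJoinList.level_eq (h : IsJoinList Λ Ts S) (i : ℕ) :
    level S i = ⋃ T ∈ Ts, level T i := by
  induction Ts generalizing S with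
  | nil =>
    obtain rfl : S = [] := h
    simp [level]
  | cons T Ts ih =>
    obtain ⟨J, hJ, CT, CJ, CS, hCT, hCJ, hCS, hsupp⟩ := h
    rw [← hCS.suppOf_getD, hsupp, hCT.suppOf_getD, hCJ.suppOf_getD, ih hJ]
    simp

theorem isJoinList_of_level_eq (hacyc : Acyclic Λ) (hTs : ∀ T ∈ Ts, Admissible Λ T)
    (hS : Admissible Λ S) (h : ∀ i, level S i = ⋃ T ∈ Ts, level T i) : IsJoinList Λ Ts S := by
  induction Ts generalizing S with
  | nil =>
    refine List.eq_nil_iff_forall_not_mem.2 fun v hv => ?_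
    have : v ∈ level S 0 := List.count_pos_iff.2 hv
    simp [h 0] at this
  | cons T Ts ih =>
    have hTs' : ∀ T' ∈ Ts, Admissible Λ T' := fun T' hT' => hTs T' (List.mem_cons_of_mem _ hT')
    obtain ⟨J, CJ, hCJ, hJ⟩ := (isLevelChain_biUnion_level hTs').exists_segments hacyc
    obtain ⟨CT, hCT⟩ := (hTs T List.mem_cons_self).exists_segments hacyc
    obtain ⟨CS, hCS⟩ := hS.exists_segments hacyc
    refine ⟨J, ih hTs' hCJ.admissible hJ, CT, CJ, CS, hCT, hCJ, hCS, fun i => ?_⟩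
    rw [hCS.suppOf_getD, hCT.suppOf_getD, hCJ.suppOf_getD, h, hJ]
    simp

end Joins

section Principal

/-- The levels of the principal sequence `S_{r,x}`. -/
def principalLevel (Λ : Fin n → Fin n → ℕ) (r : ℕ) (x : Fin n) (i : ℕ) : Set (Fin n) :=
  if i < r then (hull Λ)^[r - 1 - i] (upSet Λ x) else ∅

variable {r r' i : ℕ} {x x' : Fin n} {T U : List (Fin n)}

theorem principalLevel_of_le (h : r ≤ i) : principalLevel Λ r x i = ∅ :=
  if_neg (not_lt.2 h)

theorem principalLevel_pred (hr : 0 < r) : principalLevel Λ r x (r - 1) = upSet Λ x := by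
  rw [principalLevel, if_pos (by omega), Nat.sub_self, Function.iterate_zero_apply]

theorem principalLevel_eq_hull (h : i + 1 < r) :
    principalLevel Λ r x i = hull Λ (principalLevel Λ r x (i + 1)) := by
  rw [principalLevel, principalLevel, if_pos (by omega), if_pos h,
    show r - 1 - i = r - 1 - (i + 1) + 1 by omega, Function.iterate_succ_apply']

theorem principalLevel_nonempty_iff : (principalLevel Λ r x i).Nonempty ↔ i < r := by
  refine ⟨fun ⟨v, hv⟩ => not_le.1 fun hi => by simp [principalLevel_of_le hi] at hv,
    fun hi => ⟨x, ?_⟩⟩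
  rw [principalLevel, if_pos hi]
  induction r - 1 - i with
  | zero => exact Relation.ReflTransGen.refl
  | succ k ih => exact Function.iterate_succ_apply' (hull Λ) k _ ▸ subset_hull _ ih

theorem isLevelChain_principalLevel (r : ℕ) (x : Fin n) :
    IsLevelChain Λ (principalLevel Λ r x) := by
  refine ⟨fun i => ?_, fun i => ?_, r, principalLevel_of_le le_rfl⟩
  · rw [principalLevel]
    split_ifs
    · cases r - 1 - i with
      | zero => exact isFilter_upSet x
      | succ k => exact Function.iterate_succ_apply' (hull Λ) k _ ▸ isFilter_hull _
    · exact fun _ h => h.elim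
  · rcases lt_or_ge (i + 1) r with h | h
    · exact (principalLevel_eq_hull h).ge
    · rw [principalLevel_of_le h, hull_empty]
      exact Set.empty_subset _

theorem IsLevelChain.principalLevel_subset {F : ℕ → Set (Fin n)} (hF : IsLevelChain Λ F)
    (hx : x ∈ F (r - 1)) (i : ℕ) : principalLevel Λ r x i ⊆ F i := by
  induction hk : r - i generalizing i with
  | zero => simp [principalLevel_of_le (show r ≤ i by omega)]
  | succ k ih =>
    rcases lt_or_ge (i + 1) r with h | h
    · rw [principalLevel_eq_hull h]
      exact (hull_mono (ih (i + 1) (by omega))).trans (hF.hull_subset i)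
    · obtain rfl : i = r - 1 := by omega
      rw [principalLevel_pred (by omega)]
      exact fun y hy => hF.isFilter _ x hx y hy

theorem IsPrincipalSeq.level_eq (h : IsPrincipalSeq Λ r x T) (i : ℕ) :
    level T i = principalLevel Λ r x i := by
  obtain ⟨segs, hsegs, hlen, hr, hhull, htop⟩ := h
  induction hk : r - i generalizing i with
  | zero =>
    rw [principalLevel_of_le (by omega), ← hsegs.suppOf_getD, List.getD_eq_default _ _ (by omega)]
    simp [suppOf]
  | succ k ih =>
    rw [← hsegs.suppOf_getD]
    rcases lt_or_ge (i + 1) r with h | h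
    · rw [hhull i h, hsegs.suppOf_getD, ih (i + 1) (by omega), principalLevel_eq_hull h]
    · obtain rfl : i = r - 1 := by omega
      rw [htop, principalLevel_pred hr]

theorem IsPrincipalSeq.pos (h : IsPrincipalSeq Λ r x T) : 0 < r :=
  h.choose_spec.2.2.1

theorem IsPrincipalSeq.admissible (h : IsPrincipalSeq Λ r x T) : Admissible Λ T :=
  h.choose_spec.1.admissible

theorem isPrincipalSeq_of_level_eq (hacyc : Acyclic Λ) (hT : Admissible Λ T) (hr : 0 < r)
    (h : ∀ i, level T i = principalLevel Λ r x i) : IsPrincipalSeq Λ r x T := by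
  obtain ⟨segs, hsegs⟩ := hT.exists_segments hacyc
  have hlen : segs.length = r := eq_of_forall_lt_iff fun i => by
    rw [← hsegs.level_nonempty_iff, h, principalLevel_nonempty_iff]
  refine ⟨segs, hsegs, hlen, hr, fun i hi => ?_, ?_⟩
  · rw [hsegs.suppOf_getD, hsegs.suppOf_getD, h, h, principalLevel_eq_hull hi]
  · rw [hsegs.suppOf_getD, h, principalLevel_pred hr]

theorem exists_isPrincipalSeq (hacyc : Acyclic Λ) (hr : 0 < r) (x : Fin n) :
    ∃ T, IsPrincipalSeq Λ r x T := by
  obtain ⟨T, segs, hsegs, hlevel⟩ := (isLevelChain_principalLevel r x).exists_segments hacyc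
  exact ⟨T, isPrincipalSeq_of_level_eq hacyc hsegs.admissible hr hlevel⟩

theorem IsPrincipalSeq.sim (hT : IsPrincipalSeq Λ r x T) (hU : IsPrincipalSeq Λ r x U) :
    Sim (edges Λ) T U :=
  sim_of_level_eq hT.admissible hU.admissible fun i => by rw [hT.level_eq, hU.level_eq]

theorem IsPrincipalSeq.unique (hacyc : Acyclic Λ) (h : IsPrincipalSeq Λ r x T)
    (h' : IsPrincipalSeq Λ r' x' T) : r = r' ∧ x = x' := by
  have hlevel : ∀ i, principalLevel Λ r x i = principalLevel Λ r' x' i := fun i => by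
    rw [← h.level_eq, ← h'.level_eq]
  have hr : r = r' := eq_of_forall_lt_iff fun i => by
    rw [← principalLevel_nonempty_iff (Λ := Λ) (x := x), hlevel, principalLevel_nonempty_iff]
  subst hr
  have hup := hlevel (r - 1)
  rw [principalLevel_pred h.pos, principalLevel_pred h.pos] at hup
  have hx' : x' ∈ upSet Λ x := hup ▸ Relation.ReflTransGen.refl
  have hx : x ∈ upSet Λ x' := hup.symm ▸ Relation.ReflTransGen.refl
  exact ⟨rfl, PathLE.antisymm hacyc hx' hx⟩

end Principal

section Decomposition

variable {S : List (Fin n)} {segs : List (List (Fin n))} {Ts : List (List (Fin n))}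

theorem Segments.joinPair_iff (hsegs : Segments Λ S segs) {p : ℕ × Fin n} :
    JoinPair Λ segs p ↔ 0 < p.1 ∧ MinimalIn Λ (level S (p.1 - 1) \ hull Λ (level S p.1)) p.2 := by
  rw [JoinPair, hsegs.suppOf_getD, hsegs.suppOf_getD]
  refine ⟨fun h => ⟨h.1, h.2.2⟩, fun h => ⟨h.1, ?_, h.2⟩⟩
  have := (hsegs.level_nonempty_iff (p.1 - 1)).1 ⟨p.2, h.2.1.1⟩
  omega

theorem finite_setOf_joinPair (Λ : Fin n → Fin n → ℕ) (segs : List (List (Fin n))) :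
    {p | JoinPair Λ segs p}.Finite :=
  ((Set.finite_Iic segs.length).prod Set.finite_univ).subset fun _ hp => ⟨hp.2.1, trivial⟩

theorem Segments.level_eq_iUnion_principalLevel (hacyc : Acyclic Λ) (hsegs : Segments Λ S segs)
    (i : ℕ) : level S i = ⋃ (p) (_ : JoinPair Λ segs p), principalLevel Λ p.1 p.2 i := by
  refine subset_antisymm ?_ (Set.iUnion₂_subset fun p hp =>
    hsegs.admissible.isLevelChain.principalLevel_subset ((hsegs.joinPair_iff.1 hp).2.1.1) i)
  induction hk : segs.length - i generalizing i with
  | zero =>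
    intro u hu
    exact absurd ((hsegs.level_nonempty_iff i).1 ⟨u, hu⟩) (by omega)
  | succ k ih =>
    intro u hu
    by_cases hB : u ∈ hull Λ (level S (i + 1))
    · replace hB := hull_mono (ih (i + 1) (by omega)) hB
      simp only [hull_iUnion, Set.mem_iUnion] at hB ⊢
      obtain ⟨p, hp, hup⟩ := hB
      exact ⟨p, hp, (isLevelChain_principalLevel p.1 p.2).hull_subset i hup⟩
    · obtain ⟨v, hv, hvu⟩ := hacyc.exists_minimalIn_pathLE (show u ∈ _ \ _ from ⟨hu, hB⟩)
      refine Set.mem_iUnion₂.2 ⟨(i + 1, v), hsegs.joinPair_iff.2 ⟨i.succ_pos, hv⟩, ?_⟩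
      have htop : principalLevel Λ (i + 1) v i = upSet Λ v := principalLevel_pred i.succ_pos
      exact htop ▸ hvu

theorem Segments.isJoinList_map (hacyc : Acyclic Λ) (hsegs : Segments Λ S segs)
    {ps : List (ℕ × Fin n)} (hps : ∀ p, p ∈ ps ↔ JoinPair Λ segs p)
    {F : ℕ × Fin n → List (Fin n)} (hF : ∀ p ∈ ps, IsPrincipalSeq Λ p.1 p.2 (F p)) :
    IsJoinList Λ (ps.map F) S := by
  have hadm : ∀ T ∈ ps.map F, Admissible Λ T := fun T hT => by
    obtain ⟨p, hp, rfl⟩ := List.mem_map.1 hT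
    exact (hF p hp).admissible
  refine isJoinList_of_level_eq hacyc hadm hsegs.admissible fun i => ?_
  rw [hsegs.level_eq_iUnion_principalLevel hacyc]
  ext v
  simp only [Set.mem_iUnion, List.mem_map, exists_prop]
  constructor
  · rintro ⟨p, hp, hv⟩
    exact ⟨F p, ⟨p, (hps p).2 hp, rfl⟩, (hF p ((hps p).2 hp)).level_eq i ▸ hv⟩
  · rintro ⟨_, ⟨p, hp, rfl⟩, hv⟩
    exact ⟨p, (hps p).1 hp, (hF p hp).level_eq i ▸ hv⟩

theorem IsJoinList.exists_isPrincipalSeq (hsegs : Segments Λ S segs)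
    (hTs : ∀ T ∈ Ts, IsPrincipal Λ T) (hjoin : IsJoinList Λ Ts S) {p : ℕ × Fin n}
    (hp : JoinPair Λ segs p) : ∃ T ∈ Ts, IsPrincipalSeq Λ p.1 p.2 T := by
  obtain ⟨h, v⟩ := p
  obtain ⟨hpos, ⟨hvS, hvB⟩, hmin⟩ := hsegs.joinPair_iff.1 hp
  dsimp only at hpos hvS hvB hmin ⊢
  rw [hjoin.level_eq] at hvS
  obtain ⟨T, hT, hvT⟩ := Set.mem_iUnion₂.1 hvS
  obtain ⟨r, x, hTrx⟩ := hTs T hT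
  have hTS : ∀ i, level T i ⊆ level S i := fun i => by
    rw [hjoin.level_eq]
    exact Set.subset_biUnion_of_mem (u := fun T => level T i) hT
  rw [hTrx.level_eq] at hvT
  have hhr : h - 1 < r := principalLevel_nonempty_iff.1 ⟨v, hvT⟩
  -- if `h < r`, the level `h - 1` of `T` is the hull of its level `h`, which misses `v`
  obtain rfl : r = h := by
    by_contra hne
    rw [principalLevel_eq_hull (by omega), Nat.sub_add_cancel hpos, ← hTrx.level_eq] at hvT
    exact hvB (hull_mono (hTS h) hvT)
  rw [principalLevel_pred hpos] at hvT
  have hxS : x ∈ level S (r - 1) := hTS _ (hTrx.level_eq _ ▸ principalLevel_pred hpos ▸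
    (Relation.ReflTransGen.refl : x ∈ upSet Λ x))
  obtain rfl : x = v :=
    hmin x ⟨hxS, fun hx => hvB (isFilter_hull _ x hx v hvT)⟩ hvT
  exact ⟨T, hT, hTrx⟩

end Decomposition

section Uniqueness

theorem exists_perm_of_injective {α : Type*} [Fintype α] {l : ℕ} {f g : α → Fin l}
    (hf : Function.Injective f) (hg : Function.Injective g) (hl : l ≤ Fintype.card α) :
    ∃ σ : Equiv.Perm (Fin l), ∀ i, ∃ a, f a = i ∧ g a = σ i := by
  have hcard : Fintype.card α = Fintype.card (Fin l) :=
    le_antisymm (Fintype.card_le_of_injective f hf) (by simpa using hl)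
  have hfb := (Fintype.bijective_iff_injective_and_card f).2 ⟨hf, hcard⟩
  have hgb := (Fintype.bijective_iff_injective_and_card g).2 ⟨hg, hcard⟩
  refine ⟨(Equiv.ofBijective f hfb).symm.trans (Equiv.ofBijective g hgb), fun i => ?_⟩
  exact ⟨(Equiv.ofBijective f hfb).symm i, (Equiv.ofBijective f hfb).apply_symm_apply i, rfl⟩

variable {S : List (Fin n)} {segs : List (List (Fin n))} {Ts : List (List (Fin n))}
  {P : Finset (ℕ × Fin n)}

theorem IsJoinList.exists_injective_index (hacyc : Acyclic Λ) (hsegs : Segments Λ S segs)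
    (hP : ∀ p, p ∈ P ↔ JoinPair Λ segs p) (hTs : ∀ T ∈ Ts, IsPrincipal Λ T)
    (hjoin : IsJoinList Λ Ts S) :
    ∃ f : P → Fin Ts.length, Function.Injective f ∧
      ∀ p, IsPrincipalSeq Λ p.1.1 p.1.2 (Ts.get (f p)) := by
  have : ∀ p : P, ∃ j : Fin Ts.length, IsPrincipalSeq Λ p.1.1 p.1.2 (Ts.get j) := fun p => by
    obtain ⟨T, hT, hTp⟩ := hjoin.exists_isPrincipalSeq hsegs hTs ((hP p).1 p.2)
    obtain ⟨j, rfl⟩ := List.mem_iff_get.1 hT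
    exact ⟨j, hTp⟩
  choose f hf using this
  refine ⟨f, fun p q hpq => ?_, hf⟩
  have := (hf p).unique hacyc (hpq ▸ hf q)
  exact Subtype.ext (Prod.ext this.1 this.2)

theorem exists_perm_sim_of_isJoinList (hacyc : Acyclic Λ) (hsegs : Segments Λ S segs)
    (hP : ∀ p, p ∈ P ↔ JoinPair Λ segs p) {l : ℕ} {Us : List (List (Fin n))}
    (hTl : Ts.length = l) (hUl : Us.length = l)
    (hTs : ∀ T ∈ Ts, IsPrincipal Λ T) (hUs : ∀ U ∈ Us, IsPrincipal Λ U)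
    (hT : IsJoinList Λ Ts S) (hU : IsJoinList Λ Us S) (hl : l ≤ P.card) :
    ∃ σ : Equiv.Perm (Fin l), ∀ i,
      Sim (edges Λ) (Ts.get (Fin.cast hTl.symm i)) (Us.get (Fin.cast hUl.symm (σ i))) := by
  subst hTl
  obtain ⟨f, hf, hfT⟩ := hT.exists_injective_index hacyc hsegs hP hTs
  obtain ⟨g, hg, hgU⟩ := hU.exists_injective_index hacyc hsegs hP hUs
  obtain ⟨σ, hσ⟩ := exists_perm_of_injective hf ((Fin.cast_injective hUl).comp hg)
    (by simpa using hl)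
  refine ⟨σ, fun i => ?_⟩
  obtain ⟨p, rfl, hp⟩ := hσ i
  rw [← hp]
  simpa using (hfT p).sim (hgU p)

end Uniqueness

theorem join_of_principal_sequences_general
    (n : ℕ) (Λ : Fin n → Fin n → ℕ)
    (hacyc : ∀ a : Fin n, ¬ Relation.TransGen (fun u v => Λ u v ≠ 0) a a)
    (S : List (Fin n))
    (segs : List (List (Fin n))) (hsegs : Segments Λ S segs) :
    (∃ (ps : List (ℕ × Fin n)) (F : ℕ × Fin n → List (Fin n)),
      ps.Nodup ∧ (∀ p, p ∈ ps ↔ JoinPair Λ segs p) ∧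
      (∀ p ∈ ps, IsPrincipalSeq Λ p.1 p.2 (F p)) ∧
      IsJoinList Λ (ps.map F) S) ∧
    (∀ Ts : List (List (Fin n)), (∀ T ∈ Ts, IsPrincipal Λ T) → IsJoinList Λ Ts S →
      ∀ p : ℕ × Fin n, JoinPair Λ segs p → ∃ T ∈ Ts, IsPrincipalSeq Λ p.1 p.2 T) ∧
    ((∃ Ts : List (List (Fin n)), (∀ T ∈ Ts, IsPrincipal Λ T) ∧ IsJoinList Λ Ts S) ∧
      ∀ (l : ℕ) (Ts Us : List (List (Fin n))) (hTl : Ts.length = l) (hUl : Us.length = l),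
        (∀ T ∈ Ts, IsPrincipal Λ T) → (∀ U ∈ Us, IsPrincipal Λ U) →
        IsJoinList Λ Ts S → IsJoinList Λ Us S →
        (∀ Ts' : List (List (Fin n)), (∀ T ∈ Ts', IsPrincipal Λ T) → IsJoinList Λ Ts' S →
          l ≤ Ts'.length) →
        ∃ σ : Equiv.Perm (Fin l), ∀ i : Fin l,
          Sim (edges Λ) (Ts.get (Fin.cast hTl.symm i)) (Us.get (Fin.cast hUl.symm (σ i)))) := by
  set P := (finite_setOf_joinPair Λ segs).toFinset
  have hP : ∀ p, p ∈ P ↔ JoinPair Λ segs p := fun p => Set.Finite.mem_toFinset _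
  choose! F hF using fun (p : ℕ × Fin n) (hp : 0 < p.1) => exists_isPrincipalSeq hacyc hp p.2
  have hFP : ∀ p ∈ P.toList, IsPrincipalSeq Λ p.1 p.2 (F p) := fun p hp =>
    hF p ((hP p).1 (Finset.mem_toList.1 hp)).1
  have hjoin := hsegs.isJoinList_map hacyc (by simpa using hP) hFP
  have hprinc : ∀ T ∈ P.toList.map F, IsPrincipal Λ T := fun T hT => by
    obtain ⟨p, hp, rfl⟩ := List.mem_map.1 hT
    exact ⟨p.1, p.2, hFP p hp⟩
  refine ⟨⟨P.toList, F, P.nodup_toList, by simpa using hP, hFP, hjoin⟩,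
    fun Ts hTs hTS p hp => hTS.exists_isPrincipalSeq hsegs hTs hp, ⟨_, hprinc, hjoin⟩, ?_⟩
  intro l Ts Us hTl hUl hTs hUs hTS hUS hmin
  exact exists_perm_sim_of_isJoinList hacyc hsegs hP hTl hUl hTs hUs hTS hUS
    (by simpa using hmin _ hprinc hjoin)

theorem join_of_principal_sequences
    (n : ℕ) (hn : 2 ≤ n) (Λ : Fin n → Fin n → ℕ)
    (hloop : ∀ a, Λ a a = 0)
    (hconn : ∀ a b : Fin n, Relation.ReflTransGen (fun u v => edges Λ u v ≠ 0) a b)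
    (hacyc : ∀ a : Fin n, ¬ Relation.TransGen (fun u v => Λ u v ≠ 0) a a)
    (S : List (Fin n)) (hS : Admissible Λ S) (hne : S ≠ [])
    (segs : List (List (Fin n))) (hsegs : Segments Λ S segs) :
    (∃ (ps : List (ℕ × Fin n)) (F : ℕ × Fin n → List (Fin n)),
      ps.Nodup ∧ (∀ p, p ∈ ps ↔ JoinPair Λ segs p) ∧
      (∀ p ∈ ps, IsPrincipalSeq Λ p.1 p.2 (F p)) ∧
      IsJoinList Λ (ps.map F) S) ∧
    (∀ Ts : List (List (Fin n)), (∀ T ∈ Ts, IsPrincipal Λ T) → IsJoinList Λ Ts S →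
      ∀ p : ℕ × Fin n, JoinPair Λ segs p → ∃ T ∈ Ts, IsPrincipalSeq Λ p.1 p.2 T) ∧
    ((∃ Ts : List (List (Fin n)), (∀ T ∈ Ts, IsPrincipal Λ T) ∧ IsJoinList Λ Ts S) ∧
      ∀ (l : ℕ) (Ts Us : List (List (Fin n))) (hTl : Ts.length = l) (hUl : Us.length = l),
        (∀ T ∈ Ts, IsPrincipal Λ T) → (∀ U ∈ Us, IsPrincipal Λ U) →
        IsJoinList Λ Ts S → IsJoinList Λ Us S →
        (∀ Ts' : List (List (Fin n)), (∀ T ∈ Ts', IsPrincipal Λ T) → IsJoinList Λ Ts' S →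
          l ≤ Ts'.length) →
        ∃ σ : Equiv.Perm (Fin l), ∀ i : Fin l,
          Sim (edges Λ) (Ts.get (Fin.cast hTl.symm i)) (Us.get (Fin.cast hUl.symm (σ i)))) :=
  join_of_principal_sequences_general n Λ hacyc S segs hsegs

end KP
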